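/- Let B > A > 0. For q ∈ ℝ³ with q₃² − q₁² − q₂² ≥ 0 and ‖q‖ = √(q₃² − q₁² − q₂²), one has the identity −A q₂² − B q₁² + (A+B) q₃² − 2√(AB) ‖q‖ q₃ = (B−A) q₂² + (√A q₃ − √B ‖q‖)². Moreover, for q with q₃² − q₁² − q₂² = 1 and q₃ > 0 (the upper sheet of the hyperboloid), this quantity vanishes if and only if q = (√((B−A)/A), 0, √(B/A)) or q = (−√((B−A)/A), 0, √(B/A)). -/

import Mathlib

/-- The pseudo-Euclidean norm `‖q‖ = √(q₃² − q₁² − q₂²)`. -/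
noncomputable def pnorm (q : Fin 3 → ℝ) : ℝ :=
  Real.sqrt (q 2 ^ 2 - q 0 ^ 2 - q 1 ^ 2)

/-- `R(q) = −A q₂² − B q₁² + (A+B) q₃² − 2√(AB)‖q‖ q₃` of the hyperbolic
version of the new two-centre system. -/
noncomputable def Rhyp (A B : ℝ) (q : Fin 3 → ℝ) : ℝ :=
  -A * q 1 ^ 2 - B * q 0 ^ 2 + (A + B) * q 2 ^ 2 -
    2 * Real.sqrt (A * B) * pnorm q * q 2

/-- For `B > A > 0`: on `{q : q₃² − q₁² − q₂² ≥ 0}` one has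
`R(q) = (B−A) q₂² + (√A q₃ − √B ‖q‖)²`, and on the upper sheet
`q₃² − q₁² − q₂² = 1`, `q₃ > 0` of the hyperboloid `R` vanishes exactly at
the two points `(±√((B−A)/A), 0, √(B/A))`. -/
theorem Rhyp_identity_and_zeros (A B : ℝ) (hA : A > 0) (hBA : B > A) :
    (∀ q : Fin 3 → ℝ, q 2 ^ 2 - q 0 ^ 2 - q 1 ^ 2 ≥ 0 →
      Rhyp A B q =
        (B - A) * q 1 ^ 2 +
          (Real.sqrt A * q 2 - Real.sqrt B * pnorm q) ^ 2) ∧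
    (∀ q : Fin 3 → ℝ, q 2 ^ 2 - q 0 ^ 2 - q 1 ^ 2 = 1 → q 2 > 0 →
      (Rhyp A B q = 0 ↔
        q = ![Real.sqrt ((B - A) / A), 0, Real.sqrt (B / A)] ∨
        q = ![-Real.sqrt ((B - A) / A), 0, Real.sqrt (B / A)])) := by
  have hB : B > 0 := lt_trans hA hBA
  have hA2 : Real.sqrt A ^ 2 = A := Real.sq_sqrt hA.le
  have hB2 : Real.sqrt B ^ 2 = B := Real.sq_sqrt hB.le
  have hAB : Real.sqrt (A * B) = Real.sqrt A * Real.sqrt B :=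
    Real.sqrt_mul hA.le B
  have hid : ∀ q : Fin 3 → ℝ, q 2 ^ 2 - q 0 ^ 2 - q 1 ^ 2 ≥ 0 →
      Rhyp A B q =
        (B - A) * q 1 ^ 2 +
          (Real.sqrt A * q 2 - Real.sqrt B * pnorm q) ^ 2 := by
    intro q hq
    have hp2 : pnorm q ^ 2 = q 2 ^ 2 - q 0 ^ 2 - q 1 ^ 2 := Real.sq_sqrt hq
    unfold Rhyp
    rw [hAB]
    nlinarith [hp2, hA2, hB2]
  refine ⟨hid, fun q hq1 hq2 => ?_⟩
  have hp1 : pnorm q = 1 := by unfold pnorm; rw [hq1, Real.sqrt_one]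
  have hR := hid q (by rw [hq1]; norm_num)
  have hdiv : Real.sqrt (B / A) = Real.sqrt B / Real.sqrt A :=
    Real.sqrt_div hB.le A
  have hAne : Real.sqrt A ≠ 0 := by positivity
  rw [hR, hp1]
  constructor
  · intro h0
    have hBA' : B - A > 0 := by linarith
    have h1 : q 1 ^ 2 = 0 := by
      nlinarith [sq_nonneg (Real.sqrt A * q 2 - Real.sqrt B * 1), sq_nonneg (q 1)]
    have hq1z : q 1 = 0 := by
      have := sq_eq_zero_iff.mp h1; exact this
    have hq2v : Real.sqrt A * q 2 = Real.sqrt B := by nlinarith [sq_nonneg (Real.sqrt A * q 2 - Real.sqrt B * 1)]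
    have hq2e : q 2 = Real.sqrt (B / A) := by
      rw [hdiv]; field_simp; linarith [hq2v]
    have hq0sq : q 0 ^ 2 = (B - A) / A := by
      have h2 : q 2 ^ 2 = B / A := by
        rw [hq2e, hdiv, div_pow, hA2, hB2]
      have : q 0 ^ 2 = B / A - 1 := by rw [← h2]; nlinarith [hq1]
      rw [this]; field_simp
    have hs2 : Real.sqrt ((B - A) / A) ^ 2 = (B - A) / A :=
      Real.sq_sqrt (by positivity)
    have : q 0 = Real.sqrt ((B - A) / A) ∨ q 0 = -Real.sqrt ((B - A) / A) := by
      have := sq_eq_sq_iff_eq_or_eq_neg.mp (by rw [hq0sq, hs2] :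
        q 0 ^ 2 = Real.sqrt ((B - A) / A) ^ 2)
      tauto
    rcases this with h | h
    · left
      funext i; fin_cases i <;> simp [h, hq1z, hq2e]
    · right
      funext i; fin_cases i <;> simp [h, hq1z, hq2e]
  · have key : Real.sqrt A * Real.sqrt (B / A) - Real.sqrt B * 1 = 0 := by
      rw [mul_one, ← Real.sqrt_mul hA.le, mul_div_cancel₀ _ (ne_of_gt hA)]
      ring
    rintro (h | h) <;> subst h <;>
      simp only [Matrix.cons_val_one, Matrix.head_cons, Matrix.cons_val_two,
        Matrix.tail_cons, Matrix.cons_val_zero] <;> rw [key] <;> ring
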